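/- With U and V as defined, for every integer n ≥ 1, every integer k ≥ 0, and every real x > 0: U(x;n,k) + V(x;n,k) = ((log(n/x))^{2k}/((2k)!√n) - ∫_n^{n+1} (log(z/x))^{2k}/((2k)!√z) dz) + (∫_n^{n+1} (log(z/x))^{2k+2}/((2k+2)!·4√z) dz - (log((n+1)/x))^{2k+2}/((2k+2)!·4√(n+1))). -/

import Mathlib

/-!
With `L z = log (z / x)`, the function
`F z = √z (L^(m+1)/(m+1)! - L^(m+2)/(2 (m+2)!))` has derivative
`L^m/(m! √z) - L^(m+2)/(4 (m+2)! √z)`, so the two integrals over `[n, n+1]` combine to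
`F (n+1) - F n`. Since `log (x/n) = -log (n/x)` and the exponents `2k`, `2k+1`, `2k+2` have the
parities that `U` and `V` need, `U + V` is exactly the right-hand side written in terms of `F`.
-/

open Real intervalIntegral

noncomputable def U (x n : ℝ) (k : ℕ) : ℝ :=
  (Real.log (x / n)) ^ (2 * k) / (Nat.factorial (2 * k) * Real.sqrt n)
    - (Real.sqrt n / 2) *
      ((Real.log (x / n)) ^ (2 * k + 2) / (Nat.factorial (2 * k + 2))
        + 2 * (Real.log (x / n)) ^ (2 * k + 1) / (Nat.factorial (2 * k + 1)))

noncomputable def V (x n : ℝ) (k : ℕ) : ℝ :=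
  (Real.sqrt (n + 1) / 2) *
      ((Real.log (x / (n + 1))) ^ (2 * k + 2) / (Nat.factorial (2 * k + 2))
        + 2 * (Real.log (x / (n + 1))) ^ (2 * k + 1) / (Nat.factorial (2 * k + 1)))
    - (Real.log (x / (n + 1))) ^ (2 * k + 2) / (Nat.factorial (2 * k + 2) * 4 * Real.sqrt (n + 1))

noncomputable def logPowSqrtPrimitive (x : ℝ) (m : ℕ) (z : ℝ) : ℝ :=
  √z * (log (z / x) ^ (m + 1) / (m + 1).factorial
    - log (z / x) ^ (m + 2) / (2 * (m + 2).factorial))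

lemma hasDerivAt_log_div_const {x z : ℝ} (hx : x ≠ 0) (hz : z ≠ 0) :
    HasDerivAt (fun z ↦ log (z / x)) z⁻¹ z := by
  refine (((hasDerivAt_id z).div_const x).log (div_ne_zero hz hx)).congr_deriv ?_
  simp only [id]
  field_simp

lemma hasDerivAt_logPowSqrtPrimitive {x z : ℝ} (m : ℕ) (hx : x ≠ 0) (hz : 0 < z) :
    HasDerivAt (logPowSqrtPrimitive x m)
      (log (z / x) ^ m / (m.factorial * √z)
        - log (z / x) ^ (m + 2) / ((m + 2).factorial * 4 * √z)) z := by
  have hL := hasDerivAt_log_div_const hx hz.ne'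
  have hP := ((hL.pow (m + 1)).div_const ((m + 1).factorial : ℝ)).sub
    ((hL.pow (m + 2)).div_const (2 * ((m + 2).factorial : ℝ)))
  refine ((hasDerivAt_sqrt hz.ne').mul hP).congr_deriv ?_
  have hz_inv : z⁻¹ = (√z * √z)⁻¹ := by rw [mul_self_sqrt hz.le]
  have hfact₁ : ((m + 1).factorial : ℝ) = (m + 1) * m.factorial := by
    push_cast [Nat.factorial_succ]; ring
  have hfact₂ : ((m + 2).factorial : ℝ) = (m + 2) * (m + 1) * m.factorial := by
    push_cast [Nat.factorial_succ]; ring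
  simp only [Pi.sub_apply, Pi.pow_apply, Nat.add_sub_cancel]
  set L := log (z / x)
  rw [hfact₁, hfact₂, hz_inv]
  push_cast
  field_simp
  ring

lemma continuousOn_logPow_div_mul_sqrt {x c : ℝ} {s : Set ℝ} (m : ℕ) (hx : x ≠ 0) (hc : c ≠ 0)
    (hs : ∀ z ∈ s, 0 < z) :
    ContinuousOn (fun z ↦ log (z / x) ^ m / (c * √z)) s := by
  refine ContinuousOn.div ?_ (by fun_prop) fun z hz ↦ mul_ne_zero hc (sqrt_pos.mpr (hs z hz)).ne'
  exact ((continuousOn_id.div_const x).log fun z hz ↦ div_ne_zero (hs z hz).ne' hx).pow m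

lemma integral_logPow_div_sqrt_sub_integral {x a b : ℝ} (m : ℕ) (hx : x ≠ 0) (ha : 0 < a)
    (hb : 0 < b) :
    (∫ z in a..b, log (z / x) ^ m / (m.factorial * √z))
      - ∫ z in a..b, log (z / x) ^ (m + 2) / ((m + 2).factorial * 4 * √z)
      = logPowSqrtPrimitive x m b - logPowSqrtPrimitive x m a := by
  have hpos : ∀ z ∈ Set.uIcc a b, 0 < z := fun z hz ↦ lt_of_lt_of_le (lt_min ha hb) hz.1
  have hint₁ := (continuousOn_logPow_div_mul_sqrt m hx
    (Nat.cast_ne_zero.mpr m.factorial_ne_zero) hpos).intervalIntegrable (μ := MeasureTheory.volume)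
  have hint₂ := (continuousOn_logPow_div_mul_sqrt (m + 2) hx
    (mul_ne_zero (Nat.cast_ne_zero.mpr (m + 2).factorial_ne_zero) four_ne_zero)
    hpos).intervalIntegrable (μ := MeasureTheory.volume)
  rw [← integral_sub hint₁ hint₂]
  exact integral_eq_sub_of_hasDerivAt
    (fun z hz ↦ hasDerivAt_logPowSqrtPrimitive m hx (hpos z hz)) (hint₁.sub hint₂)

lemma U_add_V_eq (x n : ℝ) (k : ℕ) :
    U x n k + V x n k
      = log (n / x) ^ (2 * k) / ((2 * k).factorial * √n)
        - log ((n + 1) / x) ^ (2 * k + 2) / ((2 * k + 2).factorial * 4 * √(n + 1))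
        - (logPowSqrtPrimitive x (2 * k) (n + 1) - logPowSqrtPrimitive x (2 * k) n) := by
  have hlog : ∀ a : ℝ, log (x / a) = -log (a / x) := fun a ↦ by rw [← log_inv, inv_div]
  have heven : ∀ L : ℝ, (-L) ^ (2 * k) = L ^ (2 * k) := (Even.neg_pow ⟨k, by ring⟩ ·)
  have hodd : ∀ L : ℝ, (-L) ^ (2 * k + 1) = -L ^ (2 * k + 1) := (Odd.neg_pow ⟨k, rfl⟩ ·)
  have heven' : ∀ L : ℝ, (-L) ^ (2 * k + 2) = L ^ (2 * k + 2) :=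
    (Even.neg_pow ⟨k + 1, by ring⟩ ·)
  simp only [U, V, logPowSqrtPrimitive, hlog, heven, hodd, heven']
  ring

theorem stmt_7 (n : ℕ) (hn : 1 ≤ n) (k : ℕ) (x : ℝ) (hx : 0 < x) :
    U x n k + V x n k
      = ((Real.log (n / x)) ^ (2 * k) / (Nat.factorial (2 * k) * Real.sqrt n)
          - ∫ z in (n : ℝ)..(n + 1),
              (Real.log (z / x)) ^ (2 * k) / (Nat.factorial (2 * k) * Real.sqrt z))
        + ((∫ z in (n : ℝ)..(n + 1),
              (Real.log (z / x)) ^ (2 * k + 2) / (Nat.factorial (2 * k + 2) * 4 * Real.sqrt z))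
          - (Real.log ((n + 1) / x)) ^ (2 * k + 2)
              / (Nat.factorial (2 * k + 2) * 4 * Real.sqrt (n + 1))) := by
  have hn₀ : (0 : ℝ) < n := by exact_mod_cast hn
  have hFTC := integral_logPow_div_sqrt_sub_integral (2 * k) hx.ne' hn₀ (b := n + 1) (by positivity)
  rw [U_add_V_eq, ← hFTC]
  ring
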